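/- Let S = S₁ × ⋯ × Sₙ (n ≥ 1) where each Sᵢ is a finite commutative antinegative semiring with Z(Sᵢ) closed under addition, and suppose Γ₁(S) is connected with at least two vertices. Then the metric dimension of Γ₁(S) satisfies dim(Γ₁(S)) ≥ |Z(S)| − 2ⁿ + 1. -/

import Mathlib

/-- `x` is a zero-divisor of the commutative semiring `S`. -/
def IsZD {S : Type*} [CommSemiring S] (x : S) : Prop :=
  ∃ y : S, y ≠ 0 ∧ x * y = 0

/-- The total graph of a commutative semiring: distinct `x, y` are adjacent
iff `x + y` is a zero-divisor. -/
def totalGraph (S : Type*) [CommSemiring S] : SimpleGraph S where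
  Adj x y := x ≠ y ∧ IsZD (x + y)
  symm := by
    constructor
    intro x y h
    exact ⟨h.1.symm, by rw [add_comm]; exact h.2⟩
  loopless := by constructor; intro x h; exact h.1 rfl

/-- The induced subgraph of the total graph on the set of zero-divisors. -/
def gamma1 (S : Type*) [CommSemiring S] : SimpleGraph {x : S // IsZD x} :=
  SimpleGraph.comap Subtype.val (totalGraph S)

/-- A resolving set: distinct vertices have distinct distance vectors to `W`. -/
def IsResolving {V : Type*} (G : SimpleGraph V) (W : Set V) : Prop :=
  ∀ x y : V, (∀ w ∈ W, G.dist x w = G.dist y w) → x = y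

/-- The metric dimension: the least cardinality of a resolving set. -/
noncomputable def metricDim {V : Type*} (G : SimpleGraph V) : ℕ :=
  sInf {k | ∃ W : Set V, W.Finite ∧ W.ncard = k ∧ IsResolving G W}

/-!
Two vertices of `Γ₁(S)` are twins (they have the same neighbours apart from each other)
as soon as they are zero-divisors in the same coordinates: by antinegativity and the
closure of `Z(Sᵢ)` under addition, `x + y ∈ Z(S)` iff `xᵢ, yᵢ ∈ Z(Sᵢ)` for some `i`.
Twins have the same distance to every third vertex, so a resolving set contains all
but at most one vertex of each of the at most `2ⁿ - 1` twin classes `M_X`.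
-/

namespace SimpleGraph

variable {V : Type*} (G : SimpleGraph V)

def AreTwins (x y : V) : Prop :=
  ∀ z, z ≠ x → z ≠ y → (G.Adj z x ↔ G.Adj z y)

variable {G}

lemma AreTwins.symm {x y : V} (h : G.AreTwins x y) : G.AreTwins y x :=
  fun z hzy hzx => (h z hzx hzy).symm

lemma AreTwins.dist_le (hconn : G.Connected) {x y w : V} (h : G.AreTwins x y)
    (hwy : w ≠ y) : G.dist x w ≤ G.dist y w := by
  obtain ⟨p, hp⟩ := hconn.exists_walk_length_eq_dist y w
  cases p with
  | nil => exact absurd rfl hwy.symm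
  | @cons _ z _ hyz q =>
    rw [← hp, Walk.length_cons]
    rcases eq_or_ne x z with rfl | hxz
    · exact (SimpleGraph.dist_le q).trans (Nat.le_succ _)
    · have hxz' : G.Adj x z := ((h z hxz.symm hyz.ne').mpr hyz.symm).symm
      exact SimpleGraph.dist_le (Walk.cons hxz' q)

lemma AreTwins.dist_eq (hconn : G.Connected) {x y w : V} (h : G.AreTwins x y)
    (hwx : w ≠ x) (hwy : w ≠ y) : G.dist x w = G.dist y w :=
  le_antisymm (h.dist_le hconn hwy) (h.symm.dist_le hconn hwx)

end SimpleGraph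

section MetricDimension

variable {V : Type*} {G : SimpleGraph V}

lemma IsResolving.eq_of_areTwins (hconn : G.Connected) {W : Set V} (hW : IsResolving G W)
    {x y : V} (hx : x ∉ W) (hy : y ∉ W) (h : G.AreTwins x y) : x = y :=
  hW x y fun _ hw => h.dist_eq hconn (ne_of_mem_of_not_mem hw hx) (ne_of_mem_of_not_mem hw hy)

lemma isResolving_univ (hconn : G.Connected) : IsResolving G Set.univ := fun x y h => by
  have hxy := h x (Set.mem_univ x)
  rw [SimpleGraph.dist_self, eq_comm, hconn.dist_eq_zero_iff] at hxy
  exact hxy.symm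

lemma exists_isResolving_ncard_eq_metricDim [Finite V] (hconn : G.Connected) :
    ∃ W : Set V, IsResolving G W ∧ W.ncard = metricDim G := by
  obtain ⟨W, -, hcard, hW⟩ :=
    Nat.sInf_mem (s := {k | ∃ W : Set V, W.Finite ∧ W.ncard = k ∧ IsResolving G W})
      ⟨_, Set.univ, Set.toFinite _, rfl, isResolving_univ hconn⟩
  exact ⟨W, hW, hcard⟩

lemma card_le_metricDim_add_card_range [Finite V] {β : Type*} (hconn : G.Connected)
    (f : V → β) (hf : ∀ x y, f x = f y → G.AreTwins x y) :
    Nat.card V ≤ metricDim G + (Set.range f).ncard := by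
  obtain ⟨W, hW, hcard⟩ := exists_isResolving_ncard_eq_metricDim hconn
  have hinj : Set.InjOn f Wᶜ := fun x hx y hy hxy =>
    hW.eq_of_areTwins hconn hx hy (hf x y hxy)
  have hcompl : Wᶜ.ncard ≤ (Set.range f).ncard :=
    Set.ncard_le_ncard_of_injOn f (fun x _ => Set.mem_range_self x) hinj
  rw [← Set.ncard_add_ncard_compl W, hcard]
  omega

end MetricDimension

section ZeroDivisors

lemma isZD_pi_iff {ι : Type*} {S : ι → Type*} [∀ i, CommSemiring (S i)] (x : ∀ i, S i) :
    IsZD x ↔ ∃ i, IsZD (x i) := by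
  classical
  constructor
  · rintro ⟨y, hy, hxy⟩
    obtain ⟨i, hi⟩ := Function.ne_iff.mp hy
    exact ⟨i, y i, hi, congrFun hxy i⟩
  · rintro ⟨i, c, hc, hxc⟩
    refine ⟨Pi.single i c, fun h => hc (by simpa using congrFun h i), ?_⟩
    rw [← Pi.single_mul_right, hxc, Pi.single_zero]

lemma isZD_add_iff {T : Type*} [CommSemiring T]
    (anti : ∀ a b : T, a + b = 0 → a = 0 ∧ b = 0)
    (closed : ∀ a b : T, IsZD a → IsZD b → IsZD (a + b)) (a b : T) :
    IsZD (a + b) ↔ IsZD a ∧ IsZD b := by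
  refine ⟨?_, fun ⟨ha, hb⟩ => closed a b ha hb⟩
  rintro ⟨c, hc, h⟩
  rw [add_mul] at h
  obtain ⟨h1, h2⟩ := anti _ _ h
  exact ⟨⟨c, hc, h1⟩, ⟨c, hc, h2⟩⟩

variable {ι : Type*} {S : ι → Type*} [∀ i, CommSemiring (S i)]

def zdSupport (x : ∀ i, S i) : Set ι := {i | IsZD (x i)}

lemma zdSupport_nonempty {x : ∀ i, S i} (hx : IsZD x) : (zdSupport x).Nonempty :=
  (isZD_pi_iff x).mp hx

lemma gamma1_pi_adj_iff (anti : ∀ i, ∀ a b : S i, a + b = 0 → a = 0 ∧ b = 0)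
    (closed : ∀ i, ∀ a b : S i, IsZD a → IsZD b → IsZD (a + b))
    (x y : {x : ∀ i, S i // IsZD x}) :
    (gamma1 (∀ i, S i)).Adj x y ↔ x.1 ≠ y.1 ∧ (zdSupport x.1 ∩ zdSupport y.1).Nonempty := by
  change x.1 ≠ y.1 ∧ IsZD (x.1 + y.1) ↔ _
  simp only [isZD_pi_iff, Pi.add_apply, isZD_add_iff (anti _) (closed _)]
  rfl

lemma gamma1_pi_areTwins (anti : ∀ i, ∀ a b : S i, a + b = 0 → a = 0 ∧ b = 0)
    (closed : ∀ i, ∀ a b : S i, IsZD a → IsZD b → IsZD (a + b))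
    (x y : {x : ∀ i, S i // IsZD x})
    (h : zdSupport x.1 = zdSupport y.1) : (gamma1 (∀ i, S i)).AreTwins x y := by
  intro z hzx hzy
  rw [gamma1_pi_adj_iff anti closed, gamma1_pi_adj_iff anti closed, h]
  simp only [ne_eq, ← Subtype.ext_iff, hzx, hzy, not_false_eq_true, true_and]

end ZeroDivisors

theorem stmt8_general {n : ℕ} {S : Fin n → Type*} [∀ i, CommSemiring (S i)] [∀ i, Fintype (S i)]
    (anti : ∀ i, ∀ a b : S i, a + b = 0 → a = 0 ∧ b = 0)
    (closed : ∀ i, ∀ a b : S i, IsZD a → IsZD b → IsZD (a + b))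
    (hconn : (gamma1 (∀ i, S i)).Connected) :
    (Nat.card {x : ∀ i, S i // IsZD x} : ℤ) - 2 ^ n + 1 ≤
      (metricDim (gamma1 (∀ i, S i)) : ℤ) := by
  let f : {x : ∀ i, S i // IsZD x} → Set (Fin n) := fun x => zdSupport x.1
  have hbound := card_le_metricDim_add_card_range hconn f (gamma1_pi_areTwins anti closed)
  have hrange : (Set.range f).ncard ≤ 2 ^ n - 1 := by
    have hsub : Set.range f ⊆ {∅}ᶜ := by
      rintro _ ⟨x, rfl⟩
      exact (zdSupport_nonempty x.2).ne_empty
    calc (Set.range f).ncard ≤ ({∅}ᶜ : Set (Set (Fin n))).ncard := Set.ncard_le_ncard hsub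
      _ = 2 ^ n - 1 := by
        rw [Set.ncard_compl, Set.ncard_singleton, Nat.card_eq_fintype_card, Fintype.card_set,
          Fintype.card_fin]
  have hpow : 1 ≤ 2 ^ n := Nat.one_le_two_pow
  have hnat : Nat.card {x : ∀ i, S i // IsZD x} + 1 ≤ metricDim (gamma1 (∀ i, S i)) + 2 ^ n := by
    omega
  zify at hnat
  linarith

theorem stmt8 {n : ℕ} {S : Fin n → Type*} [∀ i, CommSemiring (S i)] [∀ i, Fintype (S i)]
    (anti : ∀ i, ∀ a b : S i, a + b = 0 → a = 0 ∧ b = 0)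
    (closed : ∀ i, ∀ a b : S i, IsZD a → IsZD b → IsZD (a + b)) (hn : 1 ≤ n)
    (hconn : (gamma1 (∀ i, S i)).Connected)
    (hnt : 2 ≤ Nat.card {x : ∀ i, S i // IsZD x}) :
    (Nat.card {x : ∀ i, S i // IsZD x} : ℤ) - 2 ^ n + 1 ≤
      (metricDim (gamma1 (∀ i, S i)) : ℤ) :=
  stmt8_general anti closed hconn
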